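/- Let K be the connected attractor of an IFS {S_1,...,S_N}. If there exists a spanning connected subgraph R of the Hata graph H(K) such that every edge e ∈ R admits a bifurcation pair, then K possesses a skeleton. Conversely, if K possesses a skeleton, then such a spanning graph exists. -/

import Mathlib

/-- Hata graph. -/
def hataGraph {ι E : Type*} (S : ι → E → E) (A : Set E) : SimpleGraph ι where
  Adj i j := i ≠ j ∧ (S i '' A ∩ S j '' A).Nonempty
  symm := by
    constructor
    intro i j h
    exact ⟨h.1.symm, by rw [Set.inter_comm]; exact h.2⟩
  loopless := by
    constructor
    intro i h
    exact h.1 rfl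

/-- `cylMap S ω m = S (ω 0) ∘ ⋯ ∘ S (ω (m-1))`. -/
def cylMap {E : Type*} {N : ℕ} (S : Fin N → E → E) (ω : ℕ → Fin N) : ℕ → E → E
  | 0 => id
  | m + 1 => cylMap S ω m ∘ S (ω m)

/-- A sequence is eventually periodic. -/
def EvPeriodic {α : Type*} (ω : ℕ → α) : Prop :=
  ∃ p m : ℕ, 1 ≤ m ∧ ∀ k, p ≤ k → ω (k + m) = ω k

/-! Unwinding the intersection that defines `π` gives `π ω = S (ω 0) (π (ω shifted by one))`.
Hence the values of `π` at the shifts of an eventually periodic sequence form a finite set covered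
by its own images, and the union of these sets over bifurcation pairs of all edges of a spanning
graph `R` is a skeleton whose Hata graph contains `R`. Conversely, every point of a skeleton `A` is
the image of a point of `A`; following such preimages produces an address of the point that is
eventually periodic because `A` is finite, and prefixing `i` and `j` to the addresses of
`a, b ∈ A` with `S i a = S j b` gives a bifurcation pair of the edge `{i, j}`. -/

open Set

def IsSkeleton {ι E : Type*} (S : ι → E → E) (K A : Set E) : Prop :=
  A ⊆ K ∧ A.Finite ∧ A ⊆ ⋃ i, S i '' A ∧ (hataGraph S A).Connected

def IsBifurcationPair {α E : Type*} (π : (ℕ → α) → E) (i j : α) (ω γ : ℕ → α) : Prop :=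
  EvPeriodic ω ∧ EvPeriodic γ ∧ ω 0 = i ∧ γ 0 = j ∧ π ω = π γ

theorem hataGraph_mono {ι E : Type*} (S : ι → E → E) {A B : Set E} (h : A ⊆ B) :
    hataGraph S A ≤ hataGraph S B :=
  fun _ _ hij => ⟨hij.1, hij.2.mono (inter_subset_inter (image_mono h) (image_mono h))⟩

namespace EvPeriodic

variable {α β : Type*} {f : ℕ → α}

theorem comp (h : EvPeriodic f) (g : α → β) : EvPeriodic (g ∘ f) := by
  obtain ⟨p, m, hm, hper⟩ := h
  exact ⟨p, m, hm, fun k hk => congrArg g (hper k hk)⟩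

theorem of_tail (h : EvPeriodic fun n => f (n + 1)) : EvPeriodic f := by
  obtain ⟨p, m, hm, hper⟩ := h
  refine ⟨p + 1, m, hm, fun k hk => ?_⟩
  obtain ⟨k, rfl⟩ : ∃ j, k = j + 1 := ⟨k - 1, by omega⟩
  rw [Nat.add_right_comm]
  exact hper k (by omega)

theorem shifts (h : EvPeriodic f) : EvPeriodic fun k n => f (n + k) := by
  obtain ⟨p, m, hm, hper⟩ := h
  refine ⟨p, m, hm, fun k hk => funext fun n => ?_⟩
  change f (n + (k + m)) = f (n + k)
  rw [← add_assoc]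
  exact hper _ (by omega)

theorem finite_range (h : EvPeriodic f) : (range f).Finite := by
  obtain ⟨p, m, hm, hper⟩ := h
  refine ((finite_Iio (p + m)).image f).subset ?_
  rintro _ ⟨k, rfl⟩
  induction k using Nat.strong_induction_on with
  | _ k ih =>
    by_cases hk : k < p + m
    · exact ⟨k, hk, rfl⟩
    · obtain ⟨j, rfl⟩ : ∃ j, k = j + m := ⟨k - m, by omega⟩
      rw [hper j (by omega)]
      exact ih j (by omega)

end EvPeriodic

theorem evPeriodic_iterate_of_mapsTo {α : Type*} {τ : α → α} {A : Set α} (hτ : MapsTo τ A A)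
    (hA : A.Finite) {a : α} (ha : a ∈ A) : EvPeriodic fun k => τ^[k] a := by
  obtain ⟨p, q, hpq, hpq_eq⟩ := hA.exists_lt_map_eq_of_forall_mem fun k => hτ.iterate k ha
  refine ⟨p, q - p, by omega, fun k hk => ?_⟩
  obtain ⟨j, rfl⟩ := Nat.exists_eq_add_of_le hk
  change τ^[p + j + (q - p)] a = τ^[p + j] a
  rw [show p + j + (q - p) = j + q by omega, Function.iterate_add_apply, ← hpq_eq,
    ← Function.iterate_add_apply, add_comm]

def consSeq {α : Type*} (a : α) (ω : ℕ → α) : ℕ → α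
  | 0 => a
  | n + 1 => ω n

def codingOrbit {α E : Type*} (π : (ℕ → α) → E) (ω : ℕ → α) : Set E :=
  range fun k => π fun n => ω (n + k)

theorem EvPeriodic.finite_codingOrbit {α E : Type*} {π : (ℕ → α) → E} {ω : ℕ → α}
    (h : EvPeriodic ω) : (codingOrbit π ω).Finite :=
  (h.shifts.comp π).finite_range

theorem codingOrbit_shift_subset {α E : Type*} (π : (ℕ → α) → E) (ω : ℕ → α) (k : ℕ) :
    codingOrbit π (fun n => ω (n + k)) ⊆ codingOrbit π ω := by
  rintro _ ⟨j, rfl⟩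
  exact ⟨j + k, by simp only [add_assoc]⟩

section Coding

variable {E : Type*} {N : ℕ} {S : Fin N → E → E} {K : Set E} {π : (ℕ → Fin N) → E}

theorem cylMap_succ_eq_comp_tail (ω : ℕ → Fin N) (m : ℕ) :
    cylMap S ω (m + 1) = S (ω 0) ∘ cylMap S (fun n => ω (n + 1)) m := by
  induction m with
  | zero => rfl
  | succ m ih =>
    change cylMap S ω (m + 1) ∘ S (ω (m + 1)) = _
    rw [ih]
    rfl

theorem image_cylMap_succ_subset (hS : ∀ i, MapsTo (S i) K K) (ω : ℕ → Fin N) (m : ℕ) :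
    cylMap S ω (m + 1) '' K ⊆ cylMap S ω m '' K := by
  rw [cylMap, image_comp]
  exact image_mono (hS _).image_subset

theorem coding_mem_image_cylMap (hπ : ∀ ω, (⋂ m : ℕ, cylMap S ω (m + 1) '' K) = {π ω})
    (ω : ℕ → Fin N) (m : ℕ) : π ω ∈ cylMap S ω (m + 1) '' K :=
  mem_iInter.1 ((hπ ω).symm ▸ mem_singleton (π ω)) m

theorem coding_eq_of_forall_mem (hπ : ∀ ω, (⋂ m : ℕ, cylMap S ω (m + 1) '' K) = {π ω})
    {ω : ℕ → Fin N} {x : E} (h : ∀ m, x ∈ cylMap S ω (m + 1) '' K) : π ω = x := by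
  have hx : x ∈ ⋂ m : ℕ, cylMap S ω (m + 1) '' K := mem_iInter.2 h
  rw [hπ] at hx
  exact hx.symm

theorem coding_mem (hS : ∀ i, MapsTo (S i) K K)
    (hπ : ∀ ω, (⋂ m : ℕ, cylMap S ω (m + 1) '' K) = {π ω}) (ω : ℕ → Fin N) : π ω ∈ K := by
  obtain ⟨x, hx, hxω⟩ := coding_mem_image_cylMap hπ ω 0
  rw [← hxω]
  exact hS (ω 0) hx

/-- `S (ω 0)` maps the intersection for the tail into every level `m + 2`, hence into every level,
of the decreasing intersection for `ω`. -/
theorem coding_eq_apply_coding_tail (hS : ∀ i, MapsTo (S i) K K)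
    (hπ : ∀ ω, (⋂ m : ℕ, cylMap S ω (m + 1) '' K) = {π ω}) (ω : ℕ → Fin N) :
    π ω = S (ω 0) (π fun n => ω (n + 1)) := by
  refine coding_eq_of_forall_mem hπ fun m => image_cylMap_succ_subset hS ω (m + 1) ?_
  rw [cylMap_succ_eq_comp_tail, image_comp]
  exact mem_image_of_mem _ (coding_mem_image_cylMap hπ _ m)

theorem coding_eq_of_chain (hπ : ∀ ω, (⋂ m : ℕ, cylMap S ω (m + 1) '' K) = {π ω})
    {ω : ℕ → Fin N} {x : ℕ → E} (hxK : ∀ k, x k ∈ K) (hx : ∀ k, S (ω k) (x (k + 1)) = x k) :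
    π ω = x 0 := by
  have hcyl : ∀ m, cylMap S ω m (x m) = x 0 := by
    intro m
    induction m with
    | zero => rfl
    | succ m ih => rw [cylMap, Function.comp_apply, hx, ih]
  exact coding_eq_of_forall_mem hπ fun m => ⟨x (m + 1), hxK _, hcyl _⟩

theorem exists_evPeriodic_coding_eq (hπ : ∀ ω, (⋂ m : ℕ, cylMap S ω (m + 1) '' K) = {π ω})
    {A : Set E} (hAK : A ⊆ K) (hA : A.Finite) (hAS : A ⊆ ⋃ i, S i '' A) {a : E} (ha : a ∈ A) :
    ∃ ω, EvPeriodic ω ∧ π ω = a := by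
  have hpre : ∀ b ∈ A, ∃ i, ∃ c ∈ A, S i c = b := fun b hb => by simpa using hAS hb
  have : Nonempty (Fin N) := ⟨(hpre a ha).choose⟩
  choose! σ τ hτA hτ using hpre
  have hiter : ∀ k, τ^[k] a ∈ A := fun k => (MapsTo.iterate hτA k) ha
  refine ⟨fun k => σ (τ^[k] a), (evPeriodic_iterate_of_mapsTo hτA hA ha).comp σ, ?_⟩
  refine coding_eq_of_chain hπ (fun k => hAK (hiter k)) fun k => ?_
  rw [Function.iterate_succ_apply']
  exact hτ _ (hiter k)

theorem IsSkeleton.exists_bifurcationPair (hS : ∀ i, MapsTo (S i) K K)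
    (hπ : ∀ ω, (⋂ m : ℕ, cylMap S ω (m + 1) '' K) = {π ω}) {A : Set E} (hA : IsSkeleton S K A)
    {i j : Fin N} (hij : (hataGraph S A).Adj i j) : ∃ ω γ, IsBifurcationPair π i j ω γ := by
  obtain ⟨hAK, hAfin, hAS, -⟩ := hA
  obtain ⟨-, x, ⟨a, ha, rfl⟩, b, hb, hba⟩ := hij
  obtain ⟨ω, hω, hπω⟩ := exists_evPeriodic_coding_eq hπ hAK hAfin hAS ha
  obtain ⟨γ, hγ, hπγ⟩ := exists_evPeriodic_coding_eq hπ hAK hAfin hAS hb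
  refine ⟨consSeq i ω, consSeq j γ, hω.of_tail, hγ.of_tail, rfl, rfl, ?_⟩
  rw [coding_eq_apply_coding_tail hS hπ, coding_eq_apply_coding_tail hS hπ (consSeq j γ)]
  exact (congrArg (S i) hπω).trans (hba.symm.trans (congrArg (S j) hπγ.symm))

theorem codingOrbit_subset (hS : ∀ i, MapsTo (S i) K K)
    (hπ : ∀ ω, (⋂ m : ℕ, cylMap S ω (m + 1) '' K) = {π ω}) (ω : ℕ → Fin N) :
    codingOrbit π ω ⊆ K :=
  range_subset_iff.2 fun _ => coding_mem hS hπ _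

theorem coding_mem_image_codingOrbit (hS : ∀ i, MapsTo (S i) K K)
    (hπ : ∀ ω, (⋂ m : ℕ, cylMap S ω (m + 1) '' K) = {π ω}) (ω : ℕ → Fin N) :
    π ω ∈ S (ω 0) '' codingOrbit π ω :=
  ⟨_, ⟨1, rfl⟩, (coding_eq_apply_coding_tail hS hπ ω).symm⟩

theorem biUnion_codingOrbit_subset_iUnion_image (hS : ∀ i, MapsTo (S i) K K)
    (hπ : ∀ ω, (⋂ m : ℕ, cylMap S ω (m + 1) '' K) = {π ω}) (W : Set (ℕ → Fin N)) :
    ⋃ ω ∈ W, codingOrbit π ω ⊆ ⋃ i, S i '' ⋃ ω ∈ W, codingOrbit π ω := by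
  intro x hx
  obtain ⟨ω, hω, k, rfl⟩ := mem_iUnion₂.1 hx
  have hmem := coding_mem_image_codingOrbit hS hπ fun n => ω (n + k)
  exact mem_iUnion.2 ⟨_, image_mono ((codingOrbit_shift_subset π ω k).trans
    (subset_biUnion_of_mem hω)) hmem⟩

theorem exists_isSkeleton_of_bifurcationPairs (hS : ∀ i, MapsTo (S i) K K)
    (hπ : ∀ ω, (⋂ m : ℕ, cylMap S ω (m + 1) '' K) = {π ω}) {R : SimpleGraph (Fin N)}
    (hR : R.Connected) (hbif : ∀ i j, R.Adj i j → ∃ ω γ, IsBifurcationPair π i j ω γ) :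
    ∃ A, IsSkeleton S K A := by
  choose ω γ hpair using fun e : {p : Fin N × Fin N // R.Adj p.1 p.2} => hbif _ _ e.2
  set W := range ω ∪ range γ
  have hW : ∀ ρ ∈ W, EvPeriodic ρ := by
    rintro _ (⟨e, rfl⟩ | ⟨e, rfl⟩)
    exacts [(hpair e).1, (hpair e).2.1]
  have hWmem : ∀ ρ ∈ W, π ρ ∈ S (ρ 0) '' ⋃ ρ ∈ W, codingOrbit π ρ := fun ρ hρ =>
    image_mono (subset_biUnion_of_mem hρ) (coding_mem_image_codingOrbit hS hπ ρ)
  refine ⟨⋃ ρ ∈ W, codingOrbit π ρ, iUnion₂_subset fun ρ _ => codingOrbit_subset hS hπ ρ,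
    ((finite_range ω).union (finite_range γ)).biUnion fun ρ hρ => (hW ρ hρ).finite_codingOrbit,
    biUnion_codingOrbit_subset_iUnion_image hS hπ W, hR.mono fun i j hij => ?_⟩
  obtain ⟨-, -, hi, hj, heq⟩ := hpair ⟨(i, j), hij⟩
  refine ⟨hij.ne, π (ω ⟨(i, j), hij⟩), ?_, ?_⟩
  · simpa only [hi] using hWmem _ (Or.inl ⟨⟨(i, j), hij⟩, rfl⟩)
  · simpa only [heq, hj] using hWmem _ (Or.inr ⟨⟨(i, j), hij⟩, rfl⟩)

end Coding

theorem skeleton_iff_spanning_graph_with_bifurcation_pairs_general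
    {d N : ℕ}
    (S : Fin N → EuclideanSpace ℝ (Fin d) → EuclideanSpace ℝ (Fin d))
    (K : Set (EuclideanSpace ℝ (Fin d)))
    (hKinv : K = ⋃ i, S i '' K)
    (π : (ℕ → Fin N) → EuclideanSpace ℝ (Fin d))
    (hπ : ∀ ω, (⋂ m : ℕ, cylMap S ω (m + 1) '' K) = {π ω}) :
    (∃ A : Set (EuclideanSpace ℝ (Fin d)),
        A ⊆ K ∧ A.Finite ∧ A ⊆ ⋃ i, S i '' A ∧ (hataGraph S A).Connected) ↔
    (∃ R : SimpleGraph (Fin N), R ≤ hataGraph S K ∧ R.Connected ∧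
        ∀ i j : Fin N, R.Adj i j →
          ∃ ω γ : ℕ → Fin N, EvPeriodic ω ∧ EvPeriodic γ ∧
            ω 0 = i ∧ γ 0 = j ∧ π ω = π γ) := by
  have hS : ∀ i, MapsTo (S i) K K := fun i x hx => by
    rw [hKinv]
    exact mem_iUnion_of_mem i (mem_image_of_mem _ hx)
  constructor
  · rintro ⟨A, hA⟩
    exact ⟨hataGraph S A, hataGraph_mono S hA.1, hA.2.2.2,
      fun i j hij => IsSkeleton.exists_bifurcationPair hS hπ hA hij⟩
  · rintro ⟨R, -, hR, hbif⟩
    exact exists_isSkeleton_of_bifurcationPairs hS hπ hR hbif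

theorem skeleton_iff_spanning_graph_with_bifurcation_pairs
    {d N : ℕ}
    (S : Fin N → EuclideanSpace ℝ (Fin d) → EuclideanSpace ℝ (Fin d))
    (r : Fin N → ℝ)
    (hr : ∀ i, 0 < r i ∧ r i < 1)
    (hsim : ∀ i x y, dist (S i x) (S i y) = r i * dist x y)
    (K : Set (EuclideanSpace ℝ (Fin d)))
    (hKne : K.Nonempty) (hKc : IsCompact K)
    (hKconn : IsConnected K)
    (hKinv : K = ⋃ i, S i '' K)
    (π : (ℕ → Fin N) → EuclideanSpace ℝ (Fin d))
    (hπ : ∀ ω, (⋂ m : ℕ, cylMap S ω (m + 1) '' K) = {π ω}) :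
    (∃ A : Set (EuclideanSpace ℝ (Fin d)),
        A ⊆ K ∧ A.Finite ∧ A ⊆ ⋃ i, S i '' A ∧ (hataGraph S A).Connected) ↔
    (∃ R : SimpleGraph (Fin N), R ≤ hataGraph S K ∧ R.Connected ∧
        ∀ i j : Fin N, R.Adj i j →
          ∃ ω γ : ℕ → Fin N, EvPeriodic ω ∧ EvPeriodic γ ∧
            ω 0 = i ∧ γ 0 = j ∧ π ω = π γ) :=
  skeleton_iff_spanning_graph_with_bifurcation_pairs_general S K hKinv π hπ
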